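/- Let E be a row-finite graph. The graph E has a cycle with no exit if and only if there exists a nonzero element a ∈ M_E^{gr} and a negative integer n such that ^n a = a. -/

import Mathlib

set_option linter.unusedSectionVars false

/-- The algebraic preorder on a commutative monoid: `a ≤ b` iff `b = a + c` for some `c`. -/
def algLE {M : Type*} [AddCommMonoid M] (a b : M) : Prop := ∃ c, b = a + c

/-- A row-finite directed graph: vertices `V`, edges `Ed`, source `s`, range `r`,
and for each vertex the (finite) set of edges it emits. -/
structure RFGraph (V : Type) (Ed : Type) where
  s : Ed → V
  r : Ed → V
  emit : V → Finset Ed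
  mem_emit : ∀ e v, e ∈ emit v ↔ s e = v

namespace RFGraph

variable {V Ed : Type} [DecidableEq V] (G : RFGraph V Ed)

/-- The one-step rewriting relation `→₁` on the free commutative monoid `Multiset V`:
replace one occurrence of a non-sink vertex `v` by the sum of ranges of edges emitted by `v`. -/
def Step1 (a b : Multiset V) : Prop :=
  ∃ v : V, v ∈ a ∧ G.emit v ≠ ∅ ∧ b = a.erase v + (G.emit v).val.map G.r

/-- The reflexive-transitive closure `→` of `→₁`. -/
def Step : Multiset V → Multiset V → Prop := Relation.ReflTransGen G.Step1

/-- The congruence on the free commutative monoid generated by `→₁`. -/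
def gcon : AddCon (Multiset V) := addConGen G.Step1

/-- The graph monoid `M_E`. -/
def GM := G.gcon.Quotient

instance : AddCommMonoid G.GM := inferInstanceAs (AddCommMonoid G.gcon.Quotient)

/-- One-step rewriting for the talented monoid: replace `v(i)` by `Σ_{e ∈ s⁻¹(v)} r(e)(i+1)`. -/
def TStep1 (a b : Multiset (V × ℤ)) : Prop :=
  ∃ (v : V) (i : ℤ), (v, i) ∈ a ∧ G.emit v ≠ ∅ ∧
    b = a.erase (v, i) + (G.emit v).val.map (fun e => (G.r e, i + 1))

/-- The congruence generated by the talented one-step relation. -/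
def tcon : AddCon (Multiset (V × ℤ)) := addConGen G.TStep1

/-- The talented monoid `M_E^{gr}`. -/
def TM := G.tcon.Quotient

instance : AddCommMonoid G.TM := inferInstanceAs (AddCommMonoid G.tcon.Quotient)

/-- The generator `v(i)` of the talented monoid. -/
def tgen (v : V) (i : ℤ) : G.TM := G.tcon.mk' {(v, i)}

/-- The shift `v(i) ↦ v(i+n)` on the free commutative monoid `Multiset (V × ℤ)`. -/
def shiftMul (n : ℤ) : Multiset (V × ℤ) →+ Multiset (V × ℤ) where
  toFun a := a.map fun p => (p.1, p.2 + n)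
  map_zero' := rfl
  map_add' a b := Multiset.map_add (fun p => (p.1, p.2 + n)) a b

lemma shift_inj (n : ℤ) : Function.Injective (fun p : V × ℤ => (p.1, p.2 + n)) := by
  rintro ⟨a, b⟩ ⟨c, d⟩ h
  simp only [Prod.mk.injEq] at h
  exact Prod.ext h.1 (by omega)

lemma tstep1_shift (n : ℤ) {a b : Multiset (V × ℤ)} (h : G.TStep1 a b) :
    G.TStep1 (shiftMul n a) (shiftMul n b) := by
  obtain ⟨v, i, hv, hne, rfl⟩ := h
  refine ⟨v, i + n, Multiset.mem_map.2 ⟨(v, i), hv, rfl⟩, hne, ?_⟩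
  show Multiset.map _ _ = _
  rw [Multiset.map_add]
  congr 1
  · exact (Multiset.map_erase _ (shift_inj n) (v, i) a)
  · rw [Multiset.map_map]
    congr 1
    funext e
    simp only [Function.comp_apply]
    congr 1
    omega

lemma tcon_shift (n : ℤ) {a b : Multiset (V × ℤ)} (h : G.tcon a b) :
    G.tcon (shiftMul n a) (shiftMul n b) := by
  have hle : addConGen G.TStep1 ≤
      { r := fun a b => G.tcon (shiftMul n a) (shiftMul n b)
        iseqv := ⟨fun _ => G.tcon.refl _, fun h => G.tcon.symm h,
          fun h₁ h₂ => G.tcon.trans h₁ h₂⟩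
        add' := fun h₁ h₂ => by
          simpa only [map_add] using G.tcon.add h₁ h₂ } := by
    refine AddCon.addConGen_le.2 fun x y hxy => ?_
    exact AddConGen.Rel.of _ _ (G.tstep1_shift n hxy)
  exact hle h

/-- The `ℤ`-action on the talented monoid, `ⁿ(v(i)) = v(i+n)`. -/
def tshift (n : ℤ) : G.TM →+ G.TM :=
  G.tcon.lift (G.tcon.mk'.comp (shiftMul n)) (by
    intro a b h
    show G.tcon.mk' (shiftMul n a) = G.tcon.mk' (shiftMul n b)
    exact (AddCon.eq _).2 (G.tcon_shift n h))

/-- Reachability: there is a (possibly trivial) path from `u` to `v`. -/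
def Reaches (u v : V) : Prop :=
  Relation.ReflTransGen (fun a b => ∃ e : Ed, G.s e = a ∧ G.r e = b) u v

/-- A cycle: a nonempty path of edges, closed up, with distinct source vertices. -/
def IsCycle (p : List Ed) : Prop :=
  ∃ h : p ≠ [], List.Chain' (fun e f => G.r e = G.s f) p ∧
    G.r (p.getLast h) = G.s (p.head h) ∧ (p.map G.s).Nodup

/-- The cycle `p` has an exit: some vertex on it emits an edge not on the cycle. -/
def HasExit (p : List Ed) : Prop :=
  ∃ e : Ed, (∃ f ∈ p, G.s e = G.s f) ∧ e ∉ p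

/-- The cycle `p` has no exit: every vertex on it emits exactly its cycle edge. -/
def NoExit (p : List Ed) : Prop :=
  ∀ e ∈ p, G.emit (G.s e) = {e}

/-- `ℤ`-order-ideals of the talented monoid. -/
def IsOrderIdeal (I : Set G.TM) : Prop :=
  (0 : G.TM) ∈ I ∧ (∀ a b : G.TM, a ∈ I → b ∈ I → a + b ∈ I) ∧
    (∀ (n : ℤ) (a : G.TM), a ∈ I → G.tshift n a ∈ I) ∧
    (∀ a b : G.TM, algLE a b → b ∈ I → a ∈ I)

/-- The smallest `ℤ`-order-ideal of `M_E^{gr}` containing `v(0)`. -/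
def genIdeal (v : V) : Set G.TM :=
  ⋂₀ {I : Set G.TM | G.IsOrderIdeal I ∧ G.tgen v 0 ∈ I}

/-- Minimality in the talented monoid: `0 ≠ b ≤ a` implies `a ≤ b`. -/
def TMin (a : G.TM) : Prop := ∀ b : G.TM, b ≠ 0 → algLE b a → algLE a b

/-- The covering graph `\bar E`. -/
def cover : RFGraph (V × ℤ) (Ed × ℤ) where
  s p := (G.s p.1, p.2)
  r p := (G.r p.1, p.2 + 1)
  emit p := (G.emit p.1).map ⟨fun e => (e, p.2), fun a b h => by
    simpa using congrArg Prod.fst h⟩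
  mem_emit := by
    rintro ⟨e, n⟩ ⟨v, m⟩
    simp only [Finset.mem_map, Function.Embedding.coeFn_mk, Prod.mk.injEq, G.mem_emit]
    constructor
    · rintro ⟨a, ha, rfl, rfl⟩; exact ⟨ha, rfl⟩
    · rintro ⟨rfl, rfl⟩; first | exact ⟨e, rfl, rfl, rfl⟩ | exact ⟨e, rfl, rfl⟩ | exact ⟨e, rfl⟩ | simp

/-- The set of vertices on a cycle. -/
def cycVerts (p : List Ed) : Set V := {v | ∃ e ∈ p, G.s e = v}

end RFGraph

/-!
If `p` is a cycle without exit through `v`, the defining relations carry `v(i)` once around the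
cycle to `v(i + |p|)`, so `v(0)` is a nonzero fixed point of the shift by `-|p|`.

Conversely, let `a = [X]` be fixed by the shift by `-m < 0`. Congruent multisets become equal once
all their non-sink entries are rewritten up to a common high level (`expandTo`), so the expansions
`N k` of `X` to the levels `D + k` are periodic: `N (k + m)` is `N k` shifted by `m`. A sink would
then occur at infinitely many levels of the finite multiset `N k`, so there is none. Hence the
sizes of the `N k` are nondecreasing and periodic, so constant, and every vertex occurring in them
emits exactly one edge. Following these edges among the finitely many vertices that occur closes
up into a cycle, and it has no exit.
-/

namespace RFGraph

open Function

variable {V Ed : Type} (G : RFGraph V Ed)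

theorem exists_cycle_noExit_of_mem_periodicPts {σ : V → Ed} {y : V}
    (hy : y ∈ periodicPts (G.r ∘ σ))
    (hσ : ∀ j, G.emit ((G.r ∘ σ)^[j] y) = {σ ((G.r ∘ σ)^[j] y)}) :
    ∃ p, G.IsCycle p ∧ G.NoExit p := by
  set f := G.r ∘ σ
  have hs : ∀ j, G.s (σ (f^[j] y)) = f^[j] y := fun j =>
    (G.mem_emit _ _).1 (by rw [hσ j]; exact Finset.mem_singleton_self _)
  obtain ⟨ℓ, hℓ⟩ : ∃ ℓ, minimalPeriod f y = ℓ + 1 :=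
    Nat.exists_eq_add_one.2 (minimalPeriod_pos_of_mem_periodicPts hy)
  refine ⟨(List.range (ℓ + 1)).map fun j => σ (f^[j] y), ⟨by simp, ?_, ?_, ?_⟩, ?_⟩
  · refine List.isChain_map_of_isChain _ (R := fun i j => j = i + 1) ?_
      ((List.isChain_range_succ _ _).2 fun _ _ => rfl)
    rintro i _ rfl
    rw [hs, iterate_succ_apply']
    rfl
  · simp only [List.getLast_map, List.head_map, List.getLast_range, List.head_range, hs]
    rw [Nat.add_sub_cancel, iterate_zero_apply]
    change f (f^[ℓ] y) = y
    rw [← iterate_succ_apply' f, Nat.succ_eq_add_one, ← hℓ, iterate_minimalPeriod]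
  · convert Cycle.nodup_coe_iff.1 (nodup_periodicOrbit (f := f) (x := y)) using 1
    rw [List.map_map, hℓ]
    exact List.map_congr_left fun j _ => hs j
  · intro e he
    obtain ⟨j, -, rfl⟩ := List.mem_map.1 he
    rw [hs]
    exact hσ j

theorem exists_cycle_noExit_of_finset {W : Finset V} (hW : W.Nonempty)
    (hsucc : ∀ w ∈ W, ∃ e, G.emit w = {e} ∧ G.r e ∈ W) :
    ∃ p, G.IsCycle p ∧ G.NoExit p := by
  obtain ⟨w₀, hw₀⟩ := hW
  have : Nonempty Ed := ⟨(hsucc w₀ hw₀).choose⟩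
  choose! σ hσ hσW using hsucc
  have hmaps : Set.MapsTo (G.r ∘ σ) W W := hσW
  obtain ⟨a, b, hab, heq⟩ := W.finite_toSet.exists_lt_map_eq_of_forall_mem
    (f := fun k => (G.r ∘ σ)^[k] w₀) fun k => hmaps.iterate k hw₀
  have hy : (G.r ∘ σ)^[a] w₀ ∈ periodicPts (G.r ∘ σ) := by
    refine mk_mem_periodicPts (n := b - a) (by omega) ?_
    rw [IsPeriodicPt, IsFixedPt, ← iterate_add_apply, Nat.sub_add_cancel hab.le]
    exact heq.symm
  refine G.exists_cycle_noExit_of_mem_periodicPts hy fun j => hσ _ ?_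
  rw [← iterate_add_apply]
  exact hmaps.iterate _ hw₀

theorem exists_cycle_noExit_of_periodic_successors {U : ℕ → Multiset V} {m : ℕ} (hm : 0 < m)
    (hper : Periodic U m) (hU : U 0 ≠ 0)
    (hsucc : ∀ k, U (k + 1) = (U k).bind fun w => (G.emit w).val.map G.r)
    (hsink : ∀ k, ∀ w ∈ U k, G.emit w ≠ ∅) :
    ∃ p, G.IsCycle p ∧ G.NoExit p := by
  classical
  have hcard : ∀ k, Multiset.card (U (k + 1)) = ((U k).map fun w => (G.emit w).card).sum := by
    intro k
    rw [hsucc, Multiset.card_bind]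
    simp only [Function.comp_def, Multiset.card_map]
    rfl
  have hdeg : ∀ k, ∀ w ∈ U k, 1 ≤ (G.emit w).card := fun k w hw =>
    Finset.card_pos.2 (Finset.nonempty_iff_ne_empty.2 (hsink k w hw))
  have hmono : Monotone fun k => Multiset.card (U k) := monotone_nat_of_le_succ fun k => by
    simpa [hcard] using Multiset.sum_map_le_sum_map _ _ (hdeg k)
  have hdeg1 : ∀ k, ∀ w ∈ U k, (G.emit w).card = 1 := by
    intro k w hw
    by_contra hne
    have hlt := Multiset.sum_lt_sum (hdeg k) ⟨w, hw, (hdeg k w hw).lt_of_ne' hne⟩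
    have := hmono (show k + 1 ≤ k + m by omega)
    simp only [hper k, hcard] at this
    simp only [Multiset.map_const', Multiset.sum_replicate, smul_eq_mul, mul_one] at hlt
    omega
  refine G.exists_cycle_noExit_of_finset (W := (Finset.range m).biUnion fun k => (U k).toFinset)
    ?_ fun w hw => ?_
  · obtain ⟨w, hw⟩ := Multiset.exists_mem_of_ne_zero hU
    exact ⟨w, Finset.mem_biUnion.2 ⟨0, Finset.mem_range.2 hm, Multiset.mem_toFinset.2 hw⟩⟩
  · obtain ⟨k, -, hwk⟩ := Finset.mem_biUnion.1 hw
    rw [Multiset.mem_toFinset] at hwk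
    obtain ⟨e, he⟩ := Finset.card_eq_one.1 (hdeg1 k w hwk)
    refine ⟨e, he, Finset.mem_biUnion.2 ⟨(k + 1) % m, Finset.mem_range.2 (Nat.mod_lt _ hm), ?_⟩⟩
    rw [Multiset.mem_toFinset, hper.map_mod_nat, hsucc]
    exact Multiset.mem_bind.2 ⟨w, hwk, Multiset.mem_map.2 ⟨e, by simp [he], rfl⟩⟩

theorem shiftMul_apply (n : ℤ) (Z : Multiset (V × ℤ)) :
    shiftMul n Z = Z.map fun p => (p.1, p.2 + n) := rfl

theorem shiftMul_shiftMul (s t : ℤ) (Z : Multiset (V × ℤ)) :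
    shiftMul s (shiftMul t Z) = shiftMul (t + s) Z := by
  simp only [shiftMul_apply, Multiset.map_map, Function.comp_def, add_assoc]

theorem shiftMul_neg_shiftMul (t : ℤ) (Z : Multiset (V × ℤ)) :
    shiftMul t (shiftMul (-t) Z) = Z := by
  simp [shiftMul_apply]

theorem mem_shiftMul {t : ℤ} {Z : Multiset (V × ℤ)} {p : V × ℤ} :
    p ∈ shiftMul t Z ↔ (p.1, p.2 - t) ∈ Z := by
  rw [shiftMul_apply, Multiset.mem_map]
  constructor
  · rintro ⟨q, hq, rfl⟩
    simpa using hq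
  · exact fun h => ⟨_, h, by simp⟩

theorem map_fst_shiftMul (t : ℤ) (Z : Multiset (V × ℤ)) :
    (shiftMul t Z).map Prod.fst = Z.map Prod.fst := by
  simp only [shiftMul_apply, Multiset.map_map, Function.comp_def]

open Classical in
noncomputable def expand : ℕ → V → ℤ → Multiset (V × ℤ)
  | 0, v, i => {(v, i)}
  | k + 1, v, i =>
    if G.emit v = ∅ then {(v, i)} else (G.emit v).val.bind fun e => expand k (G.r e) (i + 1)

section Expansion

variable {k : ℕ} {v : V} {i : ℤ}

theorem expand_zero : G.expand 0 v i = {(v, i)} := rfl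

theorem expand_succ_of_ne (h : G.emit v ≠ ∅) :
    G.expand (k + 1) v i = (G.emit v).val.bind fun e => G.expand k (G.r e) (i + 1) :=
  if_neg h

theorem expand_of_sink (h : G.emit v = ∅) : ∀ k, G.expand k v i = {(v, i)}
  | 0 => rfl
  | _ + 1 => if_pos h

theorem expand_ne_zero : G.expand k v i ≠ 0 := by
  induction k generalizing v i with
  | zero => simp [expand_zero]
  | succ k ih =>
    by_cases h : G.emit v = ∅
    · simp [G.expand_of_sink h]
    · obtain ⟨e, he⟩ := Finset.nonempty_iff_ne_empty.2 h
      obtain ⟨p, hp⟩ := Multiset.exists_mem_of_ne_zero (ih (v := G.r e) (i := i + 1))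
      rw [G.expand_succ_of_ne h]
      exact fun hz => Multiset.notMem_zero p (hz ▸ Multiset.mem_bind.2 ⟨e, he, hp⟩)

theorem level_of_mem_expand {p : V × ℤ} (hp : p ∈ G.expand k v i) :
    p.2 = i + k ∨ G.emit p.1 = ∅ := by
  induction k generalizing v i with
  | zero => simp_all [expand_zero]
  | succ k ih =>
    by_cases h : G.emit v = ∅
    · rw [G.expand_of_sink h, Multiset.mem_singleton] at hp
      exact Or.inr (hp ▸ h)
    · rw [G.expand_succ_of_ne h] at hp
      obtain ⟨e, -, hpe⟩ := Multiset.mem_bind.1 hp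
      exact (ih hpe).imp_left fun h => by omega

theorem expand_shift (t : ℤ) : G.expand k v (i + t) = shiftMul t (G.expand k v i) := by
  induction k generalizing v i with
  | zero => rfl
  | succ k ih =>
    by_cases h : G.emit v = ∅
    · simp only [G.expand_of_sink h]
      rfl
    · rw [G.expand_succ_of_ne h, G.expand_succ_of_ne h, shiftMul_apply, Multiset.map_bind]
      refine Multiset.bind_congr fun e _ => ?_
      rw [add_right_comm, ih, shiftMul_apply]

/-- Entries at level `≥ d` are left alone, since then `(d - p.2).toNat = 0`. -/
noncomputable def expandTo (d : ℤ) (Z : Multiset (V × ℤ)) : Multiset (V × ℤ) :=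
  Z.bind fun p => G.expand (d - p.2).toNat p.1 p.2

variable {d : ℤ} {Z : Multiset (V × ℤ)}

theorem expandTo_add (Y Z : Multiset (V × ℤ)) :
    G.expandTo d (Y + Z) = G.expandTo d Y + G.expandTo d Z :=
  Multiset.add_bind _ _ _

theorem expandTo_singleton : G.expandTo d {(v, i)} = G.expand (d - i).toNat v i :=
  Multiset.singleton_bind _ _

theorem expandTo_of_forall_le (h : ∀ p ∈ Z, d ≤ p.2) : G.expandTo d Z = Z := by
  rw [expandTo, Multiset.bind_congr (g := fun p => {p}), Multiset.bind_singleton, Multiset.map_id']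
  intro p hp
  rw [Int.toNat_of_nonpos (by linarith [h p hp]), expand_zero]

theorem expandTo_expand (k l : ℕ) (v : V) (i : ℤ) :
    G.expandTo (i + k + l) (G.expand k v i) = G.expand (k + l) v i := by
  induction k generalizing v i with
  | zero =>
    rw [expand_zero, expandTo_singleton]
    congr
    omega
  | succ k ih =>
    by_cases h : G.emit v = ∅
    · rw [G.expand_of_sink h, expandTo_singleton, G.expand_of_sink h, G.expand_of_sink h]
    · rw [G.expand_succ_of_ne h, Nat.add_right_comm, G.expand_succ_of_ne h, expandTo,
        Multiset.bind_assoc]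
      refine Multiset.bind_congr fun e _ => ?_
      rw [← ih]
      change G.expandTo _ _ = _
      congr 1
      push_cast
      ring

theorem expandTo_expandTo {d' : ℤ} (h : d ≤ d') (Z : Multiset (V × ℤ)) :
    G.expandTo d' (G.expandTo d Z) = G.expandTo d' Z := by
  rw [expandTo, expandTo, Multiset.bind_assoc]
  refine Multiset.bind_congr fun ⟨v, i⟩ _ => ?_
  change G.expandTo d' (G.expand (d - i).toNat v i) = G.expand (d' - i).toNat v i
  by_cases hi : d ≤ i
  · rw [Int.toNat_of_nonpos (by omega), expand_zero, expandTo_singleton]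
  · have := G.expandTo_expand (d - i).toNat (d' - d).toNat v i
    rwa [show i + (d - i).toNat + (d' - d).toNat = d' by omega,
      show (d - i).toNat + (d' - d).toNat = (d' - i).toNat by omega] at this

theorem expandTo_shiftMul (t : ℤ) (Z : Multiset (V × ℤ)) :
    G.expandTo (d + t) (shiftMul t Z) = shiftMul t (G.expandTo d Z) := by
  simp only [expandTo, shiftMul_apply, Multiset.bind_map, Multiset.map_bind]
  refine Multiset.bind_congr fun p _ => ?_
  rw [show d + t - (p.2 + t) = d - p.2 by ring, G.expand_shift, shiftMul_apply]

theorem expandTo_ne_zero (h : Z ≠ 0) : G.expandTo d Z ≠ 0 := by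
  obtain ⟨p, hp⟩ := Multiset.exists_mem_of_ne_zero h
  obtain ⟨q, hq⟩ := Multiset.exists_mem_of_ne_zero
    (G.expand_ne_zero (k := (d - p.2).toNat) (v := p.1) (i := p.2))
  exact fun hz => Multiset.notMem_zero q (hz ▸ Multiset.mem_bind.2 ⟨p, hp, hq⟩)

theorem mem_expandTo_of_sink {p : V × ℤ} (hp : p ∈ Z) (h : G.emit p.1 = ∅) (d : ℤ) :
    p ∈ G.expandTo d Z :=
  Multiset.mem_bind.2 ⟨p, hp, by rw [G.expand_of_sink h]; exact Multiset.mem_singleton_self _⟩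

theorem level_of_mem_expandTo {p : V × ℤ} (hZ : ∀ q ∈ Z, q.2 ≤ d) (hp : p ∈ G.expandTo d Z) :
    p.2 = d ∨ G.emit p.1 = ∅ := by
  obtain ⟨q, hq, hpq⟩ := Multiset.mem_bind.1 hp
  exact (G.level_of_mem_expand hpq).imp_left fun h => by have := hZ q hq; omega

theorem expandTo_succ (hZ : ∀ p ∈ Z, p.2 = d ∧ G.emit p.1 ≠ ∅) :
    G.expandTo (d + 1) Z = Z.bind fun p => (G.emit p.1).val.map fun e => (G.r e, d + 1) := by
  refine Multiset.bind_congr fun p hp => ?_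
  obtain ⟨hd, hne⟩ := hZ p hp
  rw [hd, show (d + 1 - d).toNat = 0 + 1 by omega, G.expand_succ_of_ne hne]
  exact Multiset.bind_singleton _ _

theorem expandTo_eq_expandTo_of_le {Y : Multiset (V × ℤ)} {d' : ℤ} (hd : d ≤ d')
    (h : G.expandTo d Y = G.expandTo d Z) : G.expandTo d' Y = G.expandTo d' Z := by
  rw [← G.expandTo_expandTo hd, h, G.expandTo_expandTo hd]

theorem emit_ne_empty_of_mem_expandTo {X : Multiset (V × ℤ)} {m : ℕ} {d₀ : ℤ} (hm : 0 < m)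
    (hper : ∀ d ≥ d₀, G.expandTo (d + m) X = shiftMul m (G.expandTo d X)) (hd : d₀ ≤ d)
    {p : V × ℤ} (hp : p ∈ G.expandTo d X) : G.emit p.1 ≠ ∅ := by
  intro hsink
  have hiter (t : ℕ) :
      G.expandTo (d + (t * m : ℕ)) X = shiftMul (t * m : ℕ) (G.expandTo d X) := by
    induction t with
    | zero => simp [shiftMul_apply]
    | succ t ih =>
      rw [show ((t + 1) * m : ℕ) = ((t * m : ℕ) : ℤ) + m by push_cast; ring, ← add_assoc,
        hper _ (by omega), ih, shiftMul_shiftMul]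
  have hmem : ∀ t : ℕ, (p.1, p.2 - (t * m : ℕ)) ∈ G.expandTo d X := fun t => by
    have := G.mem_expandTo_of_sink hp hsink (d + (t * m : ℕ))
    rw [G.expandTo_expandTo (by omega), hiter] at this
    exact mem_shiftMul.1 this
  refine Set.infinite_of_injective_forall_mem (f := fun t : ℕ => (p.1, p.2 - (t * m : ℕ)))
    (fun s t hst => ?_) hmem (G.expandTo d X).finite_toSet
  simp only [Prod.mk.injEq, sub_right_inj, Nat.cast_inj, true_and] at hst
  exact Nat.eq_of_mul_eq_mul_right hm hst

end Expansion

section TalentedMonoid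

variable [DecidableEq V]

theorem tshift_mk (n : ℤ) (Z : Multiset (V × ℤ)) :
    G.tshift n (G.tcon.mk' Z) = G.tcon.mk' (shiftMul n Z) := rfl

theorem tshift_tgen (n i : ℤ) (v : V) : G.tshift n (G.tgen v i) = G.tgen v (i + n) := rfl

theorem eq_zero_iff_of_tcon {Y Z : Multiset (V × ℤ)} (h : G.tcon Y Z) : Y = 0 ↔ Z = 0 := by
  let c : AddCon (Multiset (V × ℤ)) :=
    { r := fun Y Z => (Y = 0 ↔ Z = 0)
      iseqv := ⟨fun _ => Iff.rfl, Iff.symm, Iff.trans⟩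
      add' := fun h₁ h₂ => by simp only [add_eq_zero]; exact and_congr h₁ h₂ }
  refine (AddCon.addConGen_le (c := c)).2 (fun Y Z hYZ => ?_) h
  obtain ⟨v, i, hv, hne, rfl⟩ := hYZ
  refine iff_of_false (fun hz => Multiset.notMem_zero _ (hz ▸ hv)) fun hz => hne ?_
  rw [add_eq_zero, Multiset.map_eq_zero, Finset.val_eq_zero] at hz
  exact hz.2

theorem tgen_ne_zero (v : V) (i : ℤ) : G.tgen v i ≠ 0 := fun h =>
  Multiset.singleton_ne_zero _ ((G.eq_zero_iff_of_tcon ((AddCon.eq _).1 h)).2 rfl)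

theorem tgen_eq_of_emit_eq_singleton {v : V} {e : Ed} (h : G.emit v = {e}) (i : ℤ) :
    G.tgen v i = G.tgen (G.r e) (i + 1) := by
  refine (AddCon.eq _).2 (AddConGen.Rel.of _ _
    ⟨v, i, Multiset.mem_singleton_self _, by simp [h], ?_⟩)
  simp [h]

theorem tgen_eq_of_isChain {e : Ed} {q : List Ed}
    (hch : (e :: q).IsChain fun e f => G.r e = G.s f)
    (hno : ∀ f ∈ e :: q, G.emit (G.s f) = {f}) (i : ℤ) :
    G.tgen (G.s e) i =
      G.tgen (G.r ((e :: q).getLast (List.cons_ne_nil e q))) (i + (q.length + 1)) := by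
  induction q generalizing e i with
  | nil => simpa using G.tgen_eq_of_emit_eq_singleton (hno e (by simp)) i
  | cons f q ih =>
    obtain ⟨hef, hch'⟩ := List.isChain_cons_cons.1 hch
    rw [G.tgen_eq_of_emit_eq_singleton (hno e List.mem_cons_self) i, hef,
      ih hch' (fun g hg => hno g (List.mem_cons_of_mem _ hg)), List.getLast_cons_cons]
    congr 1
    simp only [List.length_cons]
    push_cast
    ring

theorem exists_tshift_eq_self_of_cycle {p : List Ed} (hc : G.IsCycle p) (hx : G.NoExit p) :
    ∃ (a : G.TM) (n : ℤ), a ≠ 0 ∧ n < 0 ∧ G.tshift n a = a := by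
  obtain ⟨hne, hch, hclose, -⟩ := hc
  obtain ⟨e, q, rfl⟩ := List.exists_cons_of_ne_nil hne
  refine ⟨G.tgen (G.s e) 0, -(q.length + 1), G.tgen_ne_zero _ _, by omega, ?_⟩
  rw [tshift_tgen, G.tgen_eq_of_isChain hch hx, hclose]
  simp

theorem exists_expandTo_eq_of_tcon {Y Z : Multiset (V × ℤ)} (h : G.tcon Y Z) :
    ∃ d, G.expandTo d Y = G.expandTo d Z := by
  let c : AddCon (Multiset (V × ℤ)) :=
    { r := fun Y Z => ∃ d, G.expandTo d Y = G.expandTo d Z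
      iseqv := ⟨fun _ => ⟨0, rfl⟩, fun ⟨d, h⟩ => ⟨d, h.symm⟩, fun ⟨d₁, h₁⟩ ⟨d₂, h₂⟩ =>
        ⟨max d₁ d₂, (G.expandTo_eq_expandTo_of_le (le_max_left _ _) h₁).trans
          (G.expandTo_eq_expandTo_of_le (le_max_right _ _) h₂)⟩⟩
      add' := fun ⟨d₁, h₁⟩ ⟨d₂, h₂⟩ => ⟨max d₁ d₂, by
        rw [expandTo_add, expandTo_add, G.expandTo_eq_expandTo_of_le (le_max_left _ _) h₁,
          G.expandTo_eq_expandTo_of_le (le_max_right _ _) h₂]⟩ }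
  refine (AddCon.addConGen_le (c := c)).2 (fun Y Z hYZ => ?_) h
  obtain ⟨v, i, hv, hne, rfl⟩ := hYZ
  refine ⟨i + 1, ?_⟩
  conv_lhs => rw [← Multiset.cons_erase hv, ← Multiset.singleton_add]
  rw [expandTo_add, expandTo_add, add_comm, expandTo_singleton,
    show (i + 1 - i).toNat = 0 + 1 by omega, G.expand_succ_of_ne hne,
    G.expandTo_of_forall_le (Z := Multiset.map _ _) (by simp)]
  exact congrArg _ (Multiset.bind_singleton _ _)

theorem expandTo_periodic_of_tcon {X : Multiset (V × ℤ)} {m : ℕ}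
    (h : G.tcon (shiftMul (-m) X) X) :
    ∃ d₀, ∀ d ≥ d₀, G.expandTo (d + m) X = shiftMul m (G.expandTo d X) := by
  obtain ⟨d₀, h₀⟩ := G.exists_expandTo_eq_of_tcon h
  refine ⟨d₀, fun d hd => ?_⟩
  calc G.expandTo (d + m) X = shiftMul m (shiftMul (-m) (G.expandTo (d + m) X)) :=
        (shiftMul_neg_shiftMul _ _).symm
    _ = shiftMul m (G.expandTo d (shiftMul (-m) X)) := by
        rw [← G.expandTo_shiftMul, add_neg_cancel_right]
    _ = shiftMul m (G.expandTo d X) := by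
        rw [← G.expandTo_expandTo hd, h₀, G.expandTo_expandTo hd]

theorem exists_cycle_noExit_of_tcon_shiftMul {X : Multiset (V × ℤ)} (hX : X ≠ 0) {m : ℕ}
    (hm : 0 < m) (h : G.tcon (shiftMul (-m) X) X) : ∃ p, G.IsCycle p ∧ G.NoExit p := by
  obtain ⟨d₀, hper⟩ := G.expandTo_periodic_of_tcon h
  obtain ⟨D, hD⟩ := (insert d₀ (X.map Prod.snd).toFinset).exists_le
  set N : ℕ → Multiset (V × ℤ) := fun k => G.expandTo (D + k) X
  have hD₀ : d₀ ≤ D := hD d₀ (Finset.mem_insert_self _ _)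
  have hsink : ∀ k, ∀ p ∈ N k, G.emit p.1 ≠ ∅ := fun k p hp =>
    G.emit_ne_empty_of_mem_expandTo hm hper (by omega) hp
  have hX_le : ∀ k : ℕ, ∀ q ∈ X, q.2 ≤ D + k := fun k q hq =>
    (hD q.2 <| Finset.mem_insert_of_mem <| Multiset.mem_toFinset.2 <|
      Multiset.mem_map_of_mem _ hq).trans (by omega)
  have hlevel : ∀ k, ∀ p ∈ N k, p.2 = D + k := fun k p hp =>
    (G.level_of_mem_expandTo (hX_le k) hp).resolve_right (hsink k p hp)
  refine G.exists_cycle_noExit_of_periodic_successors (U := fun k => (N k).map Prod.fst) hm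
    (fun k => ?_) (by simpa using G.expandTo_ne_zero hX) (fun k => ?_) fun k w hw => ?_
  · simp only [N]
    rw [show D + ((k + m : ℕ) : ℤ) = D + k + m by push_cast; ring, hper _ (by omega),
      map_fst_shiftMul]
  · have : N (k + 1) = G.expandTo (D + k + 1) (N k) := by
      rw [G.expandTo_expandTo (by omega), add_assoc]
      simp only [N, Nat.cast_add_one]
    rw [this, G.expandTo_succ fun p hp => ⟨hlevel k p hp, hsink k p hp⟩, Multiset.map_bind,
      Multiset.bind_map]
    simp [Multiset.map_map]
  · obtain ⟨p, hp, rfl⟩ := Multiset.mem_map.1 hw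
    exact hsink k p hp

end TalentedMonoid

end RFGraph

/-- The graph `E` has a cycle with no exit if and only if there are a nonzero
`a ∈ M_E^{gr}` and a negative integer `n` with `ⁿa = a`. -/
theorem cycle_no_exit_iff_periodic {V Ed : Type} [DecidableEq V] (G : RFGraph V Ed) :
    (∃ p : List Ed, G.IsCycle p ∧ G.NoExit p) ↔
      ∃ (a : G.TM) (n : ℤ), a ≠ 0 ∧ n < 0 ∧ G.tshift n a = a := by
  refine ⟨fun ⟨p, hc, hx⟩ => G.exists_tshift_eq_self_of_cycle hc hx, ?_⟩
  rintro ⟨a, n, ha, hn, hfix⟩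
  obtain ⟨X, rfl⟩ := AddCon.mk'_surjective a
  obtain ⟨m, hm⟩ := Int.eq_ofNat_of_zero_le (neg_nonneg.2 hn.le)
  rw [← neg_neg n, hm, RFGraph.tshift_mk] at hfix
  exact G.exists_cycle_noExit_of_tcon_shiftMul (by rintro rfl; exact ha rfl) (by omega)
    ((AddCon.eq _).1 hfix)
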